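/- arXiv:math/0503691 — 11 statements merged into one kernel-verified Lean document; each statement's English description precedes it below -/
import Mathlib

section
/- Let m ≥ 2 and let A be an m×m real symmetric matrix satisfying 2·a_{i,j} < a_{i,i} + a_{j,j} for all i ≠ j (i.e., the induced subdivision of the Newton polytope of the corresponding tropical quadric is maximal in nodes). Let A* be the tropical adjoint of A. Then 2·(A*)_{i,j} < (A*)_{i,i} + (A*)_{j,j} for all i ≠ j (i.e., the dual subdivision is again maximal in nodes). -/
/-!
Take a permutation `σ` attaining the off-diagonal minor `A*ᵢⱼ`: it pairs the rows `r ≠ i` with the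
columns `c ≠ j`. Summing `2 a_rc ≤ a_rr + a_cc` over these pairs bounds `2 A*ᵢⱼ` by the diagonal terms
of `A*ᵢᵢ` and `A*ⱼⱼ`, and the inequality is strict because column `i` is paired with some row `r ≠ i`.
-/

/-- The tropical determinant of an `m × m` real matrix: the maximum over all
permutations `σ` of `∑ k, M k (σ k)`. -/
noncomputable def tropDet {m : ℕ} (M : Matrix (Fin m) (Fin m) ℝ) : ℝ :=
  Finset.univ.sup' Finset.univ_nonempty fun σ : Equiv.Perm (Fin m) => ∑ k, M k (σ k)

/-- The `(i,j)`-tropical minor: the tropical determinant of the submatrix obtained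
by deleting row `i` and column `j`. -/
noncomputable def tropMinor {n : ℕ} (M : Matrix (Fin (n + 1)) (Fin (n + 1)) ℝ)
    (i j : Fin (n + 1)) : ℝ :=
  tropDet (M.submatrix i.succAbove j.succAbove)

/-- The tropical adjoint of a matrix: entries are the tropical minors. -/
noncomputable def tropAdj {n : ℕ} (M : Matrix (Fin (n + 1)) (Fin (n + 1)) ℝ) :
    Matrix (Fin (n + 1)) (Fin (n + 1)) ℝ :=
  fun i j => tropMinor M i j

section TropDet

variable {m : ℕ} (M : Matrix (Fin m) (Fin m) ℝ)

theorem sum_le_tropDet (σ : Equiv.Perm (Fin m)) : ∑ k, M k (σ k) ≤ tropDet M :=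
  Finset.le_sup' (fun σ : Equiv.Perm (Fin m) => ∑ k, M k (σ k)) (Finset.mem_univ σ)

theorem sum_diag_le_tropDet : ∑ k, M k k ≤ tropDet M :=
  sum_le_tropDet M 1

theorem exists_tropDet_eq_sum : ∃ σ : Equiv.Perm (Fin m), tropDet M = ∑ k, M k (σ k) := by
  obtain ⟨σ, -, hσ⟩ := Finset.exists_mem_eq_sup' Finset.univ_nonempty
    fun σ : Equiv.Perm (Fin m) => ∑ k, M k (σ k)
  exact ⟨σ, hσ⟩

end TropDet

theorem two_mul_sum_lt_sum_diag_add_sum_diag {ι α : Type*} [Fintype ι] (M : Matrix α α ℝ)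
    (hM : ∀ a b, a ≠ b → 2 * M a b < M a a + M b b) (r c : ι → α) (hrc : ∃ k, r k ≠ c k) :
    2 * ∑ k, M (r k) (c k) < ∑ k, M (r k) (r k) + ∑ k, M (c k) (c k) := by
  have hle : ∀ a b, 2 * M a b ≤ M a a + M b b := by
    intro a b
    rcases eq_or_ne a b with rfl | hab
    · linarith
    · exact (hM a b hab).le
  obtain ⟨k₀, hk₀⟩ := hrc
  rw [Finset.mul_sum, ← Finset.sum_add_distrib]
  exact Finset.sum_lt_sum (fun k _ => hle _ _) ⟨k₀, Finset.mem_univ _, hM _ _ hk₀⟩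

theorem two_mul_tropMinor_lt {n : ℕ} (A : Matrix (Fin (n + 1)) (Fin (n + 1)) ℝ)
    (hA : ∀ a b, a ≠ b → 2 * A a b < A a a + A b b) {i j : Fin (n + 1)} (hij : i ≠ j) :
    2 * tropMinor A i j <
      ∑ k, A (i.succAbove k) (i.succAbove k) + ∑ k, A (j.succAbove k) (j.succAbove k) := by
  obtain ⟨σ, hσ⟩ := exists_tropDet_eq_sum (A.submatrix i.succAbove j.succAbove)
  obtain ⟨k, hk⟩ := Fin.exists_succAbove_eq hij
  have hrc : ∃ l, i.succAbove l ≠ j.succAbove (σ l) :=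
    ⟨σ.symm k, by rw [Equiv.apply_symm_apply, hk]; exact Fin.succAbove_ne i _⟩
  have key := two_mul_sum_lt_sum_diag_add_sum_diag A hA i.succAbove (j.succAbove ∘ σ) hrc
  rw [Function.comp_def, Equiv.sum_comp σ fun k => A (j.succAbove k) (j.succAbove k)] at key
  rwa [tropMinor, hσ]

theorem maximal_in_nodes_dual_general {m : ℕ}
    (A : Matrix (Fin (m + 1)) (Fin (m + 1)) ℝ)
    (h : ∀ i j : Fin (m + 1), i ≠ j → 2 * A i j < A i i + A j j) :
    ∀ i j : Fin (m + 1), i ≠ j →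
      2 * tropAdj A i j < tropAdj A i i + tropAdj A j j := by
  intro i j hij
  have hi := sum_diag_le_tropDet (A.submatrix i.succAbove i.succAbove)
  have hj := sum_diag_le_tropDet (A.submatrix j.succAbove j.succAbove)
  have hminor := two_mul_tropMinor_lt A h hij
  simp only [Matrix.submatrix_apply] at hi hj
  simp only [tropAdj, tropMinor] at hminor ⊢
  linarith

/-- If an `m × m` (here `m+1 × m+1`, `m+1 ≥ 2`) real symmetric matrix satisfies
`2 a i j < a i i + a j j` for all `i ≠ j` (the induced subdivision is maximal in
nodes), then its tropical adjoint satisfies the same inequalities (the dual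
subdivision is again maximal in nodes). -/
theorem maximal_in_nodes_dual {m : ℕ} (hm : 1 ≤ m)
    (A : Matrix (Fin (m + 1)) (Fin (m + 1)) ℝ) (hsym : A.IsSymm)
    (h : ∀ i j : Fin (m + 1), i ≠ j → 2 * A i j < A i i + A j j) :
    ∀ i j : Fin (m + 1), i ≠ j →
      2 * tropAdj A i j < tropAdj A i i + tropAdj A j j :=
  maximal_in_nodes_dual_general A h
end

section
/- Let a1, a2, a3, a4, a5, a6 be real numbers (the coefficients of a tropical conic a1⊙x² ⊕ a2⊙y² ⊕ a3 ⊕ a4⊙x⊙y ⊕ a5⊙x ⊕ a6⊙y), and define the dual conic coefficients b1 = max(2a6, a2 + a3), b2 = max(2a5, a1 + a3), b3 = max(2a4, a1 + a2), b4 = max(a4 + a3, a5 + a6), b5 = max(a2 + a5, a4 + a6), b6 = max(a1 + a6, a4 + a5). If 2a4 < a1 + a2, 2a5 < a1 + a3 and 2a6 < a2 + a3 (the induced subdivision of the primal Newton triangle is maximal in nodes), then 2b4 < b1 + b2, 2b5 < b1 + b3 and 2b6 < b2 + b3 (the dual subdivision is also maximal in nodes). -/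
/-! Each dual vertex coefficient dominates the sum of the two primal vertex values it is built
from, e.g. `a2 + a3 ≤ b1`. So for `b4` both terms of the maximum are small:
`2 (a4 + a3) < (a1 + a2) + 2 a3` and `2 (a5 + a6) < (a1 + a3) + (a2 + a3)`, and both right-hand
sides equal `(a2 + a3) + (a1 + a3) ≤ b1 + b2`; the other two nodes are the same up to relabelling. -/

theorem two_mul_max_add_lt_add {x y z mxy mxz myz p q : ℝ}
    (hxy : 2 * mxy < x + y) (hxz : 2 * mxz < x + z) (hyz : 2 * myz < y + z)
    (hp : y + z ≤ p) (hq : x + z ≤ q) :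
    2 * max (mxy + z) (mxz + myz) < p + q :=
  calc 2 * max (mxy + z) (mxz + myz) = max (2 * (mxy + z)) (2 * (mxz + myz)) :=
        mul_max_of_nonneg _ _ zero_le_two
    _ < p + q := max_lt (by linarith) (by linarith)

/-- If the induced subdivision of the Newton triangle of the tropical conic with
coefficients `a1, ..., a6` is maximal in nodes, then the dual subdivision,
determined by the dual coefficients `b1, ..., b6`, is also maximal in nodes. -/
theorem conic_maximal_in_nodes_dual (a1 a2 a3 a4 a5 a6 : ℝ)
    (b1 b2 b3 b4 b5 b6 : ℝ)
    (hb1 : b1 = max (2 * a6) (a2 + a3))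
    (hb2 : b2 = max (2 * a5) (a1 + a3))
    (hb3 : b3 = max (2 * a4) (a1 + a2))
    (hb4 : b4 = max (a4 + a3) (a5 + a6))
    (hb5 : b5 = max (a2 + a5) (a4 + a6))
    (hb6 : b6 = max (a1 + a6) (a4 + a5))
    (h4 : 2 * a4 < a1 + a2) (h5 : 2 * a5 < a1 + a3) (h6 : 2 * a6 < a2 + a3) :
    2 * b4 < b1 + b2 ∧ 2 * b5 < b1 + b3 ∧ 2 * b6 < b2 + b3 := by
  have hb1' : a2 + a3 ≤ b1 := hb1 ▸ le_max_right _ _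
  have hb2' : a1 + a3 ≤ b2 := hb2 ▸ le_max_right _ _
  have hb3' : a1 + a2 ≤ b3 := hb3 ▸ le_max_right _ _
  refine ⟨?_, ?_, ?_⟩
  · rw [hb4]
    exact two_mul_max_add_lt_add h4 h5 h6 hb1' hb2'
  · rw [hb5, add_comm a2]
    exact two_mul_max_add_lt_add h5 h4 (by linarith) (by linarith) hb3'
  · rw [hb6, add_comm a1]
    exact two_mul_max_add_lt_add h6 (by linarith) (by linarith) (by linarith) (by linarith)
end

section
/- Let a1, a2, a3, a4, a5, a6 be real numbers (the coefficients of a tropical conic a1⊙x² ⊕ a2⊙y² ⊕ a3 ⊕ a4⊙x⊙y ⊕ a5⊙x ⊕ a6⊙y), and define the dual conic coefficients b1 = max(2a6, a2 + a3), b2 = max(2a5, a1 + a3), b3 = max(2a4, a1 + a2), b4 = max(a4 + a3, a5 + a6), b5 = max(a2 + a5, a4 + a6), b6 = max(a1 + a6, a4 + a5). If 2a4 > a1 + a2, 2a5 > a1 + a3 and 2a6 > a2 + a3 (the induced subdivision of the primal Newton triangle is minimal in nodes), then 2b4 ≥ b1 + b2, 2b5 ≥ b1 + b3 and 2b6 ≥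 b2 + b3 (so none of the midpoint nodes is a vertex of the dual subdivision, which is therefore also minimal in nodes). -/
/-!
When every primal midpoint node is strictly below the line through its two vertices, each dual
vertex coefficient is the tropical square of a primal midpoint coefficient (`b1 = 2a6`,
`b2 = 2a5`, `b3 = 2a4`), while each dual midpoint coefficient dominates the tropical product of
the corresponding two primal midpoint coefficients (`b4 ≥ a5 + a6`, `b5 ≥ a4 + a6`,
`b6 ≥ a4 + a5`). Doubling the latter gives the three node inequalities of the dual.
-/

theorem max_two_mul_add_max_two_mul_le_two_mul_max {α : Type*} [Ring α] [LinearOrder α]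
    [IsStrictOrderedRing α] {p x y s t : α} (hs : s ≤ 2 * y) (ht : t ≤ 2 * x) :
    max (2 * y) s + max (2 * x) t ≤ 2 * max p (x + y) := by
  rw [max_eq_left hs, max_eq_left ht, add_comm, ← mul_add]
  exact mul_le_mul_of_nonneg_left (le_max_right p (x + y)) zero_le_two

/-- If the induced subdivision of the Newton triangle of the tropical conic with
coefficients `a1, ..., a6` is minimal in nodes, then the dual subdivision,
determined by the dual coefficients `b1, ..., b6`, is also minimal in nodes. -/
theorem conic_minimal_in_nodes_dual (a1 a2 a3 a4 a5 a6 : ℝ)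
    (b1 b2 b3 b4 b5 b6 : ℝ)
    (hb1 : b1 = max (2 * a6) (a2 + a3))
    (hb2 : b2 = max (2 * a5) (a1 + a3))
    (hb3 : b3 = max (2 * a4) (a1 + a2))
    (hb4 : b4 = max (a4 + a3) (a5 + a6))
    (hb5 : b5 = max (a2 + a5) (a4 + a6))
    (hb6 : b6 = max (a1 + a6) (a4 + a5))
    (h4 : 2 * a4 > a1 + a2) (h5 : 2 * a5 > a1 + a3) (h6 : 2 * a6 > a2 + a3) :
    2 * b4 ≥ b1 + b2 ∧ 2 * b5 ≥ b1 + b3 ∧ 2 * b6 ≥ b2 + b3 := by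
  subst hb1 hb2 hb3 hb4 hb5 hb6
  exact ⟨max_two_mul_add_max_two_mul_le_two_mul_max h6.le h5.le,
    max_two_mul_add_max_two_mul_le_two_mul_max h6.le h4.le,
    max_two_mul_add_max_two_mul_le_two_mul_max h5.le h4.le⟩
end

section
/- Let m ≥ 2 and let A = (a_{i,j}) be an m×m real symmetric matrix. Let E = (ε_{i,j}) be its distortion matrix, i.e. ε_{i,j} = a_{i,j} − (a_{i,i} + a_{j,j})/2. For i ≠ j set G_{i,j} = (a_{i,i} + a_{j,j})/2 + ∑_{l ≠ i,j} a_{l,l}, and set G_{i,i} = ∑_{l ≠ i} a_{l,l}. Then for all indices i, j: tropMinor(A, i, j) = G_{i,j} + tropMinor(E, i, j). -/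
/-!
Since `a i j = ε i j + a i i / 2 + a j j / 2`, the matrix `A` is obtained from `E` by adding a
constant to each row and to each column. Every permutation picks each row and each column of a
minor exactly once, so such shifts change every permutation sum, and hence the tropical minor,
by the same amount: half the sum of the diagonal entries of `A` outside row `i`, plus half of
those outside column `j`. That amount is `G i j`.
-/

theorem tropDet_eq_add_sum_add_sum {m : ℕ} {M N : Matrix (Fin m) (Fin m) ℝ} {r c : Fin m → ℝ}
    (h : ∀ p q, M p q = N p q + r p + c q) :
    tropDet M = tropDet N + (∑ k, r k + ∑ k, c k) := by
  have hσ (σ : Equiv.Perm (Fin m)) :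
      ∑ k, M k (σ k) = (∑ k, r k + ∑ k, c k) + ∑ k, N k (σ k) := by
    simp only [h, Finset.sum_add_distrib, Equiv.sum_comp σ c]
    ring
  rw [tropDet, Finset.sup'_congr _ rfl fun σ _ => hσ σ, ← Finset.add_sup', add_comm, tropDet]

theorem tropMinor_eq_add_sum_add_sum {n : ℕ} {M N : Matrix (Fin (n + 1)) (Fin (n + 1)) ℝ}
    {r c : Fin (n + 1) → ℝ} (h : ∀ p q, M p q = N p q + r p + c q) (i j : Fin (n + 1)) :
    tropMinor M i j =
      tropMinor N i j + (∑ k, r (i.succAbove k) + ∑ k, c (j.succAbove k)) :=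
  tropDet_eq_add_sum_add_sum fun _ _ => h _ _

theorem Fin.sum_succAbove_eq_sub {M : Type*} [AddCommGroup M] {n : ℕ} (f : Fin (n + 1) → M)
    (p : Fin (n + 1)) : ∑ k, f (p.succAbove k) = ∑ l, f l - f p := by
  rw [Fin.sum_univ_succAbove f p, add_sub_cancel_left]

theorem Finset.sum_univ_sdiff_singleton {α M : Type*} [Fintype α] [DecidableEq α]
    [AddCommGroup M] (f : α → M) (i : α) : ∑ l ∈ univ \ {i}, f l = ∑ l, f l - f i := by
  rw [sum_sdiff_eq_sub (subset_univ _), sum_singleton]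

theorem Finset.sum_univ_sdiff_pair {α M : Type*} [Fintype α] [DecidableEq α]
    [AddCommGroup M] (f : α → M) {i j : α} (hij : i ≠ j) :
    ∑ l ∈ univ \ {i, j}, f l = ∑ l, f l - (f i + f j) := by
  rw [sum_sdiff_eq_sub (subset_univ _), sum_pair hij]

theorem tropMinor_eq_G_add_distortionMinor_general {m : ℕ}
    (A E : Matrix (Fin (m + 1)) (Fin (m + 1)) ℝ)
    (hE : ∀ i j, E i j = A i j - (A i i + A j j) / 2)
    (G : Fin (m + 1) → Fin (m + 1) → ℝ)
    (hGoff : ∀ i j : Fin (m + 1), i ≠ j →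
      G i j = (A i i + A j j) / 2 + ∑ l ∈ Finset.univ \ {i, j}, A l l)
    (hGdiag : ∀ i : Fin (m + 1), G i i = ∑ l ∈ Finset.univ \ {i}, A l l) :
    ∀ i j : Fin (m + 1), tropMinor A i j = G i j + tropMinor E i j := by
  intro i j
  have hG : G i j = ((∑ l, A l l - A i i) + (∑ l, A l l - A j j)) / 2 := by
    rcases eq_or_ne i j with rfl | hij
    · rw [hGdiag, Finset.sum_univ_sdiff_singleton (fun l => A l l)]
      ring
    · rw [hGoff i j hij, Finset.sum_univ_sdiff_pair (fun l => A l l) hij]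
      ring
  have hshift : ∀ p q, A p q = E p q + A p p / 2 + A q q / 2 := fun p q => by
    rw [hE]
    ring
  rw [tropMinor_eq_add_sum_add_sum hshift, ← Finset.sum_div, ← Finset.sum_div,
    Fin.sum_succAbove_eq_sub (fun l => A l l), Fin.sum_succAbove_eq_sub (fun l => A l l), hG]
  ring

/-- Decomposition of the tropical minors of a symmetric matrix `A` into a "main"
part `G i j` and the tropical minor of its distortion matrix `E`:
`tropMinor A i j = G i j + tropMinor E i j` for all `i, j`. -/
theorem tropMinor_eq_G_add_distortionMinor {m : ℕ} (hm : 1 ≤ m)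
    (A E : Matrix (Fin (m + 1)) (Fin (m + 1)) ℝ) (hsym : A.IsSymm)
    (hE : ∀ i j, E i j = A i j - (A i i + A j j) / 2)
    (G : Fin (m + 1) → Fin (m + 1) → ℝ)
    (hGoff : ∀ i j : Fin (m + 1), i ≠ j →
      G i j = (A i i + A j j) / 2 + ∑ l ∈ Finset.univ \ {i, j}, A l l)
    (hGdiag : ∀ i : Fin (m + 1), G i i = ∑ l ∈ Finset.univ \ {i}, A l l) :
    ∀ i j : Fin (m + 1), tropMinor A i j = G i j + tropMinor E i j :=
  tropMinor_eq_G_add_distortionMinor_general A E hE G hGoff hGdiag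
end

section
/- Let m ≥ 3 and let A be an m×m real symmetric matrix whose distortion values satisfy ε_{i,j} < 0 for all i ≠ j. Let A* be the tropical adjoint of A and A** the tropical adjoint of A*. Then the following are equivalent: (i) A is regular in the duality sense, i.e. there exists λ ∈ ℝ with (A**)_{i,j} = λ + a_{i,j} for all i, j; (ii) the distortion values of A** coincide with those of A, i.e. for all i ≠ j, (A**)_{i,j} − ((A**)_{i,i} + (A**)_{j,j})/2 = a_{i,j} − (a_{i,i} + a_{j,j})/2. -/
/-!
When every distortion value of `M` is nonpositive, i.e. `M k l ≤ (M k k + M l l) / 2`, averaging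
these bounds along a permutation shows that the identity permutation realises the tropical
determinant. Hence `M*` has diagonal `tr M - M i i`, and the same bound applied to the minors shows
that `M*` again has nonpositive distortion values. Applying this twice, the diagonal of `A**` is
`A`'s diagonal shifted by the constant `tr A* - tr A`, so matching distortion values force
`A** = λ + A` off the diagonal as well.
-/

open Matrix

theorem tropDet_le_sum_add_sum {m : ℕ} (M : Matrix (Fin m) (Fin m) ℝ) (a b : Fin m → ℝ)
    (h : ∀ k l, M k l ≤ a k + b l) : tropDet M ≤ ∑ k, a k + ∑ l, b l := by
  refine Finset.sup'_le _ _ fun σ _ => ?_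
  calc ∑ k, M k (σ k) ≤ ∑ k, (a k + b (σ k)) := Finset.sum_le_sum fun k _ => h k (σ k)
    _ = ∑ k, a k + ∑ l, b l := by rw [Finset.sum_add_distrib, Equiv.sum_comp σ b]

theorem tropDet_eq_trace {m : ℕ} (M : Matrix (Fin m) (Fin m) ℝ)
    (hM : ∀ k l, M k l ≤ (M k k + M l l) / 2) : tropDet M = M.trace := by
  apply le_antisymm
  · calc tropDet M ≤ ∑ k, M k k / 2 + ∑ l, M l l / 2 :=
          tropDet_le_sum_add_sum M _ _ fun k l => by linarith [hM k l]
      _ = M.trace := by rw [← Finset.sum_add_distrib]; simp [Matrix.trace]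
  · exact Finset.le_sup'_of_le _ (Finset.mem_univ (1 : Equiv.Perm (Fin m))) le_rfl

theorem sum_diag_succAbove {n : ℕ} (M : Matrix (Fin (n + 1)) (Fin (n + 1)) ℝ)
    (i : Fin (n + 1)) :
    ∑ k, M (i.succAbove k) (i.succAbove k) = M.trace - M i i := by
  rw [Matrix.trace, Fin.sum_univ_succAbove _ i]
  simp

theorem tropAdj_apply_self {n : ℕ} (M : Matrix (Fin (n + 1)) (Fin (n + 1)) ℝ)
    (hM : ∀ k l, M k l ≤ (M k k + M l l) / 2) (i : Fin (n + 1)) :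
    tropAdj M i i = M.trace - M i i := by
  rw [tropAdj, tropMinor, tropDet_eq_trace (M.submatrix _ _) fun k l => hM _ _,
    ← sum_diag_succAbove]
  rfl

theorem tropAdj_le_half_add {n : ℕ} (M : Matrix (Fin (n + 1)) (Fin (n + 1)) ℝ)
    (hM : ∀ k l, M k l ≤ (M k k + M l l) / 2) (i j : Fin (n + 1)) :
    tropAdj M i j ≤ (tropAdj M i i + tropAdj M j j) / 2 := by
  rw [tropAdj_apply_self M hM, tropAdj_apply_self M hM]
  calc tropAdj M i j
      ≤ ∑ k, M (i.succAbove k) (i.succAbove k) / 2 +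
          ∑ l, M (j.succAbove l) (j.succAbove l) / 2 :=
        tropDet_le_sum_add_sum _ _ _ fun k l => by
          rw [submatrix_apply, ← add_div]; exact hM _ _
    _ = (M.trace - M i i + (M.trace - M j j)) / 2 := by
        rw [← Finset.sum_div, ← Finset.sum_div, sum_diag_succAbove, sum_diag_succAbove]; ring

theorem tropAdj_tropAdj_apply_self {n : ℕ} (M : Matrix (Fin (n + 1)) (Fin (n + 1)) ℝ)
    (hM : ∀ k l, M k l ≤ (M k k + M l l) / 2) (i : Fin (n + 1)) :
    tropAdj (tropAdj M) i i = (tropAdj M).trace - M.trace + M i i := by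
  rw [tropAdj_apply_self _ (tropAdj_le_half_add M hM), tropAdj_apply_self M hM]
  ring

theorem regular_iff_distortion_eq_general {m : ℕ}
    (A : Matrix (Fin (m + 1)) (Fin (m + 1)) ℝ)
    (hneg : ∀ i j : Fin (m + 1), i ≠ j → A i j - (A i i + A j j) / 2 < 0) :
    (∃ lam : ℝ, ∀ i j : Fin (m + 1), tropAdj (tropAdj A) i j = lam + A i j) ↔
    (∀ i j : Fin (m + 1), i ≠ j →
      tropAdj (tropAdj A) i j -
          (tropAdj (tropAdj A) i i + tropAdj (tropAdj A) j j) / 2 =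
        A i j - (A i i + A j j) / 2) := by
  have hA : ∀ k l, A k l ≤ (A k k + A l l) / 2 := fun k l => by
    rcases eq_or_ne k l with rfl | hkl
    · linarith
    · linarith [hneg k l hkl]
  have hdiag := tropAdj_tropAdj_apply_self A hA
  constructor
  · rintro ⟨lam, hlam⟩ i j -
    rw [hlam, hlam, hlam]
    ring
  · intro hdist
    refine ⟨(tropAdj A).trace - A.trace, fun i j => ?_⟩
    rcases eq_or_ne i j with rfl | hij
    · rw [hdiag]
    · linarith [hdist i j hij, hdiag i, hdiag j]

/-- Let `A` be an `m × m` (here `m ≥ 3`) real symmetric matrix with all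
off-diagonal distortion values negative.  Then `A` is regular in the duality
sense (the double tropical adjoint equals `A` lifted by a constant) if and only
if the distortion values of the double tropical adjoint coincide with those
of `A`. -/
theorem regular_iff_distortion_eq {m : ℕ} (hm : 2 ≤ m)
    (A : Matrix (Fin (m + 1)) (Fin (m + 1)) ℝ) (hsym : A.IsSymm)
    (hneg : ∀ i j : Fin (m + 1), i ≠ j → A i j - (A i i + A j j) / 2 < 0) :
    (∃ lam : ℝ, ∀ i j : Fin (m + 1), tropAdj (tropAdj A) i j = lam + A i j) ↔
    (∀ i j : Fin (m + 1), i ≠ j →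
      tropAdj (tropAdj A) i j -
          (tropAdj (tropAdj A) i i + tropAdj (tropAdj A) j j) / 2 =
        A i j - (A i i + A j j) / 2) :=
  regular_iff_distortion_eq_general A hneg
end

section
/- Let m ≥ 3 and let A be an m×m real symmetric matrix whose distortion values satisfy ε_{i,j} < 0 for all i ≠ j. If for all pairs of distinct indices i, j one has ε_{i,j} > (max_{k ≠ i,j} ε_{j,k}) + (max_{h ≠ i,j} ε_{h,i}), then A is regular in the duality sense: there exists λ ∈ ℝ such that (A**)_{i,j} = λ + a_{i,j} for all i, j, where A* is the tropical adjoint of A and A** is the tropical adjoint of A*. -/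
/-- For `m ≥ 3` (here size `m + 1` with `2 ≤ m`), the complement of a pair of
indices is nonempty. -/
lemma compl_pair_nonempty {m : ℕ} (hm : 2 ≤ m) (i j : Fin (m + 1)) :
    (Finset.univ \ {i, j}).Nonempty := by
  rw [Finset.sdiff_nonempty]
  intro hsub
  have h1 : (Finset.univ : Finset (Fin (m + 1))).card ≤ ({i, j} : Finset (Fin (m + 1))).card :=
    Finset.card_le_card hsub
  have h2 : ({i, j} : Finset (Fin (m + 1))).card ≤ 2 :=
    (Finset.card_insert_le _ _).trans (by simp)
  rw [Finset.card_univ, Fintype.card_fin] at h1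
  omega

/-! Write `A k l = ε k l + (A k k + A l l) / 2`. A term of the `(i, j)`-minor is a bijection
from the rows `≠ i` to the columns `≠ j`; its value is `tr A - (A i i + A j j) / 2` plus the sum
of the distortions along it. Following the bijection from row `j` leads eventually to column `i`.
All distortions being nonpositive, the sum is at most `ε j i` if this path is direct, and at
most `ε j k + ε h i < ε i j` (first and last step) otherwise; the transposition of `i` and `j`
attains `ε j i = ε i j`. Hence `A* = A + u_i + u_j` for a vector `u`. Such a matrix is symmetric
with the same distortions as `A`, so the formula applies again and yields `A** = λ + A`. -/

open Finset

noncomputable def distortion {n : ℕ} (A : Matrix (Fin n) (Fin n) ℝ) (i j : Fin n) : ℝ :=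
  A i j - (A i i + A j j) / 2

section Distortion

variable {n : ℕ} (A : Matrix (Fin n) (Fin n) ℝ)

@[simp]
lemma distortion_self (i : Fin n) : distortion A i i = 0 := by
  simp [distortion]

variable {A} in
lemma distortion_comm (hA : A.IsSymm) (i j : Fin n) :
    distortion A i j = distortion A j i := by
  simp only [distortion, hA.apply i j]; ring

variable {A} in
lemma distortion_nonpos (hneg : ∀ i j, i ≠ j → distortion A i j < 0) (i j : Fin n) :
    distortion A i j ≤ 0 := by
  rcases eq_or_ne i j with rfl | hij
  · simp
  · exact (hneg i j hij).le

lemma distortion_of_add_add (u : Fin n → ℝ) :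
    distortion (Matrix.of fun i j => A i j + u i + u j) = distortion A := by
  funext i j; simp only [distortion, Matrix.of_apply]; ring

end Distortion

lemma sum_submatrix_eq_sum_distortion {n : ℕ} (A : Matrix (Fin (n + 1)) (Fin (n + 1)) ℝ)
    (i j : Fin (n + 1)) (σ : Equiv.Perm (Fin n)) :
    ∑ k, A (i.succAbove k) (j.succAbove (σ k)) = ∑ x, A x x - (A i i + A j j) / 2 +
      ∑ k, distortion A (i.succAbove k) (j.succAbove (σ k)) := by
  have hi := Fin.sum_univ_succAbove (fun x => A x x) i
  have hj := Fin.sum_univ_succAbove (fun x => A x x) j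
  have hσ := Equiv.sum_comp σ fun l => A (j.succAbove l) (j.succAbove l)
  simp only [distortion, sum_sub_distrib, ← sum_div, sum_add_distrib] at *
  linarith

lemma tropMinor_eq_of_isGreatest {n : ℕ} (A : Matrix (Fin (n + 1)) (Fin (n + 1)) ℝ)
    (i j : Fin (n + 1)) {c : ℝ}
    (hc : IsGreatest (Set.range fun σ : Equiv.Perm (Fin n) =>
      ∑ k, distortion A (i.succAbove k) (j.succAbove (σ k))) c) :
    tropMinor A i j = ∑ x, A x x - (A i i + A j j) / 2 + c := by
  obtain ⟨⟨τ, rfl⟩, hle⟩ := hc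
  simp only [tropMinor, tropDet, Matrix.submatrix_apply, sum_submatrix_eq_sum_distortion]
  refine le_antisymm (sup'_le _ _ fun σ _ => ?_) (le_sup'_of_le _ (mem_univ τ) le_rfl)
  exact add_le_add_right (hle ⟨σ, rfl⟩) _

lemma exists_perm_succAbove_eq_swap {n : ℕ} (i j : Fin (n + 1)) :
    ∃ σ : Equiv.Perm (Fin n), ∀ k, j.succAbove (σ k) = Equiv.swap i j (i.succAbove k) := by
  let e : { x // x ≠ i } ≃ { x // x ≠ j } :=
    (Equiv.swap i j).subtypeEquiv fun x => by
      simp [Equiv.swap_apply_eq_iff]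
  refine ⟨(finSuccAboveEquiv i).trans (e.trans (finSuccAboveEquiv j).symm), fun k => ?_⟩
  exact congrArg Subtype.val ((finSuccAboveEquiv j).apply_symm_apply _)

lemma sum_succAbove_swap {n : ℕ} (f : Fin (n + 1) → Fin (n + 1) → ℝ) (hf : ∀ x, f x x = 0)
    {i j : Fin (n + 1)} (hij : i ≠ j) :
    ∑ k, f (i.succAbove k) (Equiv.swap i j (i.succAbove k)) = f j i := by
  obtain ⟨k₀, hk₀⟩ := Fin.exists_succAbove_eq hij.symm
  rw [Fintype.sum_eq_single k₀ fun k hk => ?_, hk₀, Equiv.swap_apply_right]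
  rw [Equiv.swap_apply_of_ne_of_ne (Fin.succAbove_ne i k), hf]
  rw [← hk₀]; exact Fin.succAbove_right_injective.ne hk

lemma sum_succAbove_perm_le {n : ℕ} (f : Fin (n + 1) → Fin (n + 1) → ℝ) (hf : ∀ x y, f x y ≤ 0)
    {i j : Fin (n + 1)} (hij : i ≠ j) {c : ℝ} (hdirect : f j i ≤ c)
    (hpath : ∀ k ∈ univ \ {i, j}, ∀ h ∈ univ \ {i, j}, f j k + f h i ≤ c)
    (σ : Equiv.Perm (Fin n)) :
    ∑ k, f (i.succAbove k) (j.succAbove (σ k)) ≤ c := by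
  -- `k₀` indexes row `j` and `l₀` column `i`; the path from `j` to `i` is direct iff `σ k₀ = l₀`.
  obtain ⟨k₀, hk₀⟩ := Fin.exists_succAbove_eq hij.symm
  obtain ⟨l₀, hl₀⟩ := Fin.exists_succAbove_eq hij
  have hg : ∀ k, f (i.succAbove k) (j.succAbove (σ k)) ≤ 0 := fun k => hf _ _
  rcases eq_or_ne (σ k₀) l₀ with hdir | hk
  · calc ∑ k, f (i.succAbove k) (j.succAbove (σ k))
        ≤ ∑ k ∈ {k₀}, f (i.succAbove k) (j.succAbove (σ k)) :=
          sum_le_sum_of_subset_of_nonpos' (subset_univ _) fun k _ _ => hg k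
      _ ≤ c := by simpa [hk₀, hdir, hl₀] using hdirect
  · have hk₁ : k₀ ≠ σ.symm l₀ := by rintro rfl; simp at hk
    calc ∑ k, f (i.succAbove k) (j.succAbove (σ k))
        ≤ ∑ k ∈ {k₀, σ.symm l₀}, f (i.succAbove k) (j.succAbove (σ k)) :=
          sum_le_sum_of_subset_of_nonpos' (subset_univ _) fun k _ _ => hg k
      _ ≤ c := by
          rw [sum_pair hk₁, hk₀, Equiv.apply_symm_apply, hl₀]
          refine hpath _ ?_ _ ?_
          · simp only [mem_sdiff, mem_univ, mem_insert, mem_singleton, true_and, not_or]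
            refine ⟨?_, Fin.succAbove_ne j _⟩
            rw [← hl₀]; exact Fin.succAbove_right_injective.ne hk
          · simp only [mem_sdiff, mem_univ, mem_insert, mem_singleton, true_and, not_or]
            refine ⟨Fin.succAbove_ne i _, ?_⟩
            rw [← hk₀]; exact Fin.succAbove_right_injective.ne hk₁.symm

section DistortionCond

variable {m : ℕ} (hm : 2 ≤ m)

def DistortionCond (A : Matrix (Fin (m + 1)) (Fin (m + 1)) ℝ) : Prop :=
  (∀ i j, i ≠ j → distortion A i j < 0) ∧
    ∀ i j, i ≠ j →
      (univ \ {i, j}).sup' (compl_pair_nonempty hm i j) (fun k => distortion A j k) +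
        (univ \ {i, j}).sup' (compl_pair_nonempty hm i j) (fun h => distortion A h i) <
        distortion A i j

variable {hm} {A : Matrix (Fin (m + 1)) (Fin (m + 1)) ℝ}

lemma tropMinor_eq_of_distortion_cond (hsym : A.IsSymm) (hA : DistortionCond hm A)
    (i j : Fin (m + 1)) :
    tropMinor A i j = ∑ x, A x x - (A i i + A j j) / 2 + distortion A i j := by
  refine tropMinor_eq_of_isGreatest A i j ?_
  rcases eq_or_ne i j with rfl | hij
  · refine ⟨⟨1, by simp⟩, ?_⟩
    rintro _ ⟨σ, rfl⟩
    simpa using sum_nonpos fun k _ => distortion_nonpos hA.1 (i.succAbove k) (i.succAbove (σ k))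
  refine ⟨?_, ?_⟩
  · obtain ⟨σ, hσ⟩ := exists_perm_succAbove_eq_swap i j
    refine ⟨σ, ?_⟩
    simp only [hσ]
    rw [sum_succAbove_swap _ (distortion_self A) hij, distortion_comm hsym]
  · rintro _ ⟨σ, rfl⟩
    refine sum_succAbove_perm_le _ (distortion_nonpos hA.1) hij (distortion_comm hsym i j).ge
      (fun k hk h hh => ?_) σ
    linarith [hA.2 i j hij, le_sup' (fun k => distortion A j k) hk,
      le_sup' (fun h => distortion A h i) hh]

lemma tropAdj_eq_of_distortion_cond (hsym : A.IsSymm) (hA : DistortionCond hm A) :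
    tropAdj A = Matrix.of fun i j =>
      A i j + ((∑ x, A x x) / 2 - A i i) + ((∑ x, A x x) / 2 - A j j) := by
  ext i j
  rw [tropAdj, tropMinor_eq_of_distortion_cond hsym hA, distortion]
  simp only [Matrix.of_apply]
  ring

end DistortionCond

/-- Sufficient condition for regularity in the duality sense: if all off-diagonal
distortion values `ε i j` of the symmetric matrix `A` are negative and satisfy
`ε i j > (max_{k ≠ i,j} ε j k) + (max_{h ≠ i,j} ε h i)`, then the double tropical
adjoint of `A` is `A` lifted by a constant. -/
theorem regular_of_distortion_cond {m : ℕ} (hm : 2 ≤ m)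
    (A : Matrix (Fin (m + 1)) (Fin (m + 1)) ℝ) (hsym : A.IsSymm)
    (hneg : ∀ i j : Fin (m + 1), i ≠ j → A i j - (A i i + A j j) / 2 < 0)
    (hcond : ∀ i j : Fin (m + 1), i ≠ j →
      ((Finset.univ \ {i, j}).sup' (compl_pair_nonempty hm i j)
          fun k => A j k - (A j j + A k k) / 2) +
        ((Finset.univ \ {i, j}).sup' (compl_pair_nonempty hm i j)
          fun h => A h i - (A h h + A i i) / 2) <
        A i j - (A i i + A j j) / 2) :
    ∃ lam : ℝ, ∀ i j : Fin (m + 1), tropAdj (tropAdj A) i j = lam + A i j := by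
  set T := ∑ x, A x x
  have hcondA : DistortionCond hm A := ⟨hneg, hcond⟩
  have hA := tropAdj_eq_of_distortion_cond hsym hcondA
  have hdist : distortion (tropAdj A) = distortion A := by
    rw [hA]; exact distortion_of_add_add A _
  have hsymA : (tropAdj A).IsSymm :=
    Matrix.IsSymm.ext fun i j => by simp only [hA, Matrix.of_apply, hsym.apply i j]; ring
  have hcondAA : DistortionCond hm (tropAdj A) := by rwa [DistortionCond, hdist]
  have hAA := tropAdj_eq_of_distortion_cond hsymA hcondAA
  have htrace : ∑ x, tropAdj A x x = m * T := by
    simp only [hA, Matrix.of_apply, sum_add_distrib, sum_sub_distrib, sum_const, card_univ,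
      Fintype.card_fin, nsmul_eq_mul]
    push_cast; ring
  refine ⟨m * T - T, fun i j => ?_⟩
  rw [hAA, Matrix.of_apply, htrace, hA]
  simp only [Matrix.of_apply]
  ring
end

section
/- Let A be a 3×3 real symmetric matrix whose distortion values satisfy ε_{i,j} < 0 for all i ≠ j. Then A is regular in the duality sense (there exists λ ∈ ℝ with (A**)_{i,j} = λ + a_{i,j} for all i, j) if and only if for every pair of distinct indices i, j, with k the remaining third index, ε_{i,j} ≥ ε_{j,k} + ε_{k,i}. -/
/-! When `ε i j ≥ ε j k + ε k i` for all triples, each tropical minor of `A` is attained on its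
obvious term, so `A*` is the diagonal scaling `a i j + (tr A / 2 - a i i) + (tr A / 2 - a j j)`
of `A`. Tropical minors see a diagonal scaling only through additive constants, so
`A** = tr A + A`. Conversely, negative distortion makes the diagonal of `A**` equal to
`tr A + a i i`, which forces `λ = tr A`, while the `(i, j)` entry of `A**` dominates
`a i i + a j j + a i k + a k j`; with `λ = tr A` this is exactly `ε i j ≥ ε j k + ε k i`. -/

theorem tropDet_add_add {m : ℕ} (M : Matrix (Fin m) (Fin m) ℝ) (r c : Fin m → ℝ) :
    tropDet (fun i j => M i j + r i + c j) = tropDet M + (∑ i, r i + ∑ j, c j) := by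
  have hsum (σ : Equiv.Perm (Fin m)) :
      ∑ k, (M k (σ k) + r k + c (σ k)) = ∑ k, M k (σ k) + (∑ i, r i + ∑ j, c j) := by
    rw [Finset.sum_add_distrib, Finset.sum_add_distrib, Equiv.sum_comp σ c, add_assoc]
  simp only [tropDet, hsum, Finset.sup'_add]

theorem tropMinor_add_add {n : ℕ} (M : Matrix (Fin (n + 1)) (Fin (n + 1)) ℝ)
    (r c : Fin (n + 1) → ℝ) (i j : Fin (n + 1)) :
    tropMinor (fun i j => M i j + r i + c j) i j =
      tropMinor M i j + (∑ l, r l - r i) + (∑ l, c l - c j) := by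
  have h := tropDet_add_add (M.submatrix i.succAbove j.succAbove)
    (r ∘ i.succAbove) (c ∘ j.succAbove)
  simp only [tropMinor]
  rw [Fin.sum_univ_succAbove r i, Fin.sum_univ_succAbove c j]
  exact h.trans (by simp only [Function.comp_apply]; ring)

theorem tropAdj_tropAdj_of_tropAdj_eq {n : ℕ} {A : Matrix (Fin (n + 1)) (Fin (n + 1)) ℝ}
    {r c : Fin (n + 1) → ℝ} (hA : tropAdj A = fun i j => A i j + r i + c j)
    (i j : Fin (n + 1)) :
    tropAdj (tropAdj A) i j = (∑ l, r l + ∑ l, c l) + A i j := by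
  calc tropAdj (tropAdj A) i j = tropMinor (fun i j => A i j + r i + c j) i j := by rw [hA]; rfl
    _ = tropAdj A i j + (∑ l, r l - r i) + (∑ l, c l - c j) := tropMinor_add_add A r c i j
    _ = (∑ l, r l + ∑ l, c l) + A i j := by rw [hA]; ring

theorem tropDet_fin_two (M : Matrix (Fin 2) (Fin 2) ℝ) :
    tropDet M = max (M 0 0 + M 1 1) (M 0 1 + M 1 0) := by
  have hperm : (Finset.univ : Finset (Equiv.Perm (Fin 2))) = {1, Equiv.swap 0 1} := by decide
  simp [tropDet, hperm, Fin.sum_univ_two]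

section FinThree

variable {i j k : Fin 3}

theorem trace_fin_three_eq_of_ne (A : Matrix (Fin 3) (Fin 3) ℝ) (hij : i ≠ j) (hki : k ≠ i)
    (hkj : k ≠ j) : A.trace = A i i + A j j + A k k := by
  rw [Matrix.trace_fin_three]
  fin_cases i <;> fin_cases j <;> fin_cases k <;> simp_all <;> ring

theorem tropAdj_fin_three_apply_of_ne (M : Matrix (Fin 3) (Fin 3) ℝ) (hij : i ≠ j)
    (hki : k ≠ i) (hkj : k ≠ j) : tropAdj M i j = max (M j i + M k k) (M j k + M k i) := by
  fin_cases i <;> fin_cases j <;> fin_cases k <;>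
    simp_all [tropAdj, tropMinor, tropDet_fin_two, Fin.succAbove, Fin.lt_def] <;>
    grind

theorem tropAdj_fin_three_apply_self (M : Matrix (Fin 3) (Fin 3) ℝ) (hij : i ≠ j)
    (hki : k ≠ i) (hkj : k ≠ j) : tropAdj M i i = max (M j j + M k k) (M j k + M k j) := by
  fin_cases i <;> fin_cases j <;> fin_cases k <;>
    simp_all [tropAdj, tropMinor, tropDet_fin_two, Fin.succAbove, Fin.lt_def] <;>
    grind

variable {A : Matrix (Fin 3) (Fin 3) ℝ}

theorem tropAdj_apply_self_of_distortion_neg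
    (hneg : ∀ i j : Fin 3, i ≠ j → A i j - (A i i + A j j) / 2 < 0)
    (hij : i ≠ j) (hki : k ≠ i) (hkj : k ≠ j) : tropAdj A i i = A j j + A k k := by
  rw [tropAdj_fin_three_apply_self A hij hki hkj, max_eq_left]
  linarith [hneg j k hkj.symm, hneg k j hkj]

theorem tropAdj_apply_le_of_distortion_neg
    (hneg : ∀ i j : Fin 3, i ≠ j → A i j - (A i i + A j j) / 2 < 0)
    (hij : i ≠ j) (hki : k ≠ i) (hkj : k ≠ j) :
    tropAdj A i j ≤ A k k + (A i i + A j j) / 2 := by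
  rw [tropAdj_fin_three_apply_of_ne A hij hki hkj]
  apply max_le <;> linarith [hneg j i hij.symm, hneg j k hkj.symm, hneg k i hki]

theorem tropAdj_tropAdj_apply_self_of_distortion_neg
    (hneg : ∀ i j : Fin 3, i ≠ j → A i j - (A i i + A j j) / 2 < 0) (i : Fin 3) :
    tropAdj (tropAdj A) i i = A.trace + A i i := by
  obtain ⟨j, k, hij, hki, hkj⟩ : ∃ j k : Fin 3, i ≠ j ∧ k ≠ i ∧ k ≠ j := by
    fin_cases i <;> decide
  have hjj := tropAdj_apply_self_of_distortion_neg hneg hij.symm hkj hki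
  have hkk := tropAdj_apply_self_of_distortion_neg hneg hki hkj.symm hij.symm
  have hoff : tropAdj A j k + tropAdj A k j ≤ tropAdj A j j + tropAdj A k k := by
    linarith [tropAdj_apply_le_of_distortion_neg hneg hkj.symm hij hki.symm,
      tropAdj_apply_le_of_distortion_neg hneg hkj hki.symm hij]
  rw [tropAdj_fin_three_apply_self _ hij hki hkj, max_eq_left hoff, hjj, hkk,
    trace_fin_three_eq_of_ne A hij hki hkj]
  ring

theorem add_le_tropAdj_tropAdj_of_distortion_neg
    (hneg : ∀ i j : Fin 3, i ≠ j → A i j - (A i i + A j j) / 2 < 0)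
    (hij : i ≠ j) (hki : k ≠ i) (hkj : k ≠ j) :
    A i i + A j j + (A i k + A k j) ≤ tropAdj (tropAdj A) i j := by
  rw [tropAdj_fin_three_apply_of_ne _ hij hki hkj,
    tropAdj_fin_three_apply_of_ne A hij.symm hkj hki,
    tropAdj_apply_self_of_distortion_neg hneg hki hkj.symm hij.symm]
  refine le_trans ?_ (le_max_left _ _)
  linarith [le_max_right (A i j + A k k) (A i k + A k j)]

theorem tropAdj_eq_diagonal_scaling (hsym : A.IsSymm)
    (hneg : ∀ i j : Fin 3, i ≠ j → A i j - (A i i + A j j) / 2 < 0)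
    (hsuper : ∀ i j k : Fin 3, i ≠ j → k ≠ i → k ≠ j →
      A j k + A k i ≤ A i j + A k k) :
    tropAdj A = fun i j => A i j + (A.trace / 2 - A i i) + (A.trace / 2 - A j j) := by
  ext i j
  by_cases hij : i = j
  · subst hij
    obtain ⟨j, k, hij, hki, hkj⟩ : ∃ j k : Fin 3, i ≠ j ∧ k ≠ i ∧ k ≠ j := by
      fin_cases i <;> decide
    rw [tropAdj_apply_self_of_distortion_neg hneg hij hki hkj,
      trace_fin_three_eq_of_ne A hij hki hkj]
    ring
  · obtain ⟨k, hki, hkj⟩ : ∃ k : Fin 3, k ≠ i ∧ k ≠ j := by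
      fin_cases i <;> fin_cases j <;> decide
    rw [tropAdj_fin_three_apply_of_ne A hij hki hkj, hsym.apply,
      max_eq_left (hsuper i j k hij hki hkj), trace_fin_three_eq_of_ne A hij hki hkj]
    ring

end FinThree

/-- A `3 × 3` real symmetric matrix with negative off-diagonal distortion values
is regular in the duality sense if and only if for every pair of distinct indices
`i, j` (with `k` the remaining index) `ε i j ≥ ε j k + ε k i`. -/
theorem regular_iff_three_by_three (A : Matrix (Fin 3) (Fin 3) ℝ) (hsym : A.IsSymm)
    (hneg : ∀ i j : Fin 3, i ≠ j → A i j - (A i i + A j j) / 2 < 0) :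
    (∃ lam : ℝ, ∀ i j : Fin 3, tropAdj (tropAdj A) i j = lam + A i j) ↔
    (∀ i j k : Fin 3, i ≠ j → k ≠ i → k ≠ j →
      (A j k - (A j j + A k k) / 2) + (A k i - (A k k + A i i) / 2) ≤
        A i j - (A i i + A j j) / 2) := by
  constructor
  · rintro ⟨lam, hlam⟩ i j k hij hki hkj
    have hlam_eq : lam = A.trace := by
      linarith [hlam 0 0, tropAdj_tropAdj_apply_self_of_distortion_neg hneg 0]
    have hle := add_le_tropAdj_tropAdj_of_distortion_neg hneg hij hki hkj
    rw [hlam, hlam_eq, trace_fin_three_eq_of_ne A hij hki hkj] at hle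
    linarith [hsym.apply k j, hsym.apply i k]
  · intro h
    have hsuper : ∀ i j k : Fin 3, i ≠ j → k ≠ i → k ≠ j →
        A j k + A k i ≤ A i j + A k k :=
      fun i j k hij hki hkj => by linarith [h i j k hij hki hkj]
    refine ⟨A.trace, fun i j => ?_⟩
    rw [tropAdj_tropAdj_of_tropAdj_eq (tropAdj_eq_diagonal_scaling hsym hneg hsuper)]
    simp only [Finset.sum_sub_distrib, Finset.sum_const, Finset.card_univ, Fintype.card_fin,
      nsmul_eq_mul, Matrix.trace, Matrix.diag_apply]
    ring
end

section
/- Let A be a 3×3 real symmetric matrix whose distortion values satisfy ε_{i,j} > 0 for all i ≠ j (the induced subdivision of the Newton triangle of the corresponding tropical conic is minimal in nodes). Then A is never regular in the duality sense: there exists no λ ∈ ℝ such that (A**)_{i,j} = λ + a_{i,j} for all i, j, where A* is the tropical adjoint of A and A** is the tropical adjoint of A*. -/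
theorem tropAdj_fin_three (A : Matrix (Fin 3) (Fin 3) ℝ) :
    tropAdj A =
      !![max (A 1 1 + A 2 2) (A 1 2 + A 2 1), max (A 1 0 + A 2 2) (A 1 2 + A 2 0),
          max (A 1 0 + A 2 1) (A 1 1 + A 2 0);
        max (A 0 1 + A 2 2) (A 0 2 + A 2 1), max (A 0 0 + A 2 2) (A 0 2 + A 2 0),
          max (A 0 0 + A 2 1) (A 0 1 + A 2 0);
        max (A 0 1 + A 1 2) (A 0 2 + A 1 1), max (A 0 0 + A 1 2) (A 0 2 + A 1 0),
          max (A 0 0 + A 1 1) (A 0 1 + A 1 0)] := by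
  ext i j
  fin_cases i <;> fin_cases j <;> exact tropDet_fin_two _

theorem Matrix.IsSymm.exists_eq_fin_three {α : Type*} {A : Matrix (Fin 3) (Fin 3) α}
    (hA : A.IsSymm) : ∃ a b c d e f : α, A = !![a, d, e; d, b, f; e, f, c] :=
  ⟨A 0 0, A 1 1, A 2 2, A 0 1, A 0 2, A 1 2, by
    ext i j; fin_cases i <;> fin_cases j <;> simp [hA.apply 0 1, hA.apply 0 2, hA.apply 1 2]⟩

theorem tropAdj_fin_three_of_distortion_nonneg {a b c d e f : ℝ} (hd : (a + b) / 2 ≤ d)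
    (he : (a + c) / 2 ≤ e) (hf : (b + c) / 2 ≤ f) :
    tropAdj !![a, d, e; d, b, f; e, f, c] =
      !![2 * f, max (c + d) (e + f), max (b + e) (d + f);
        max (c + d) (e + f), 2 * e, max (a + f) (d + e);
        max (b + e) (d + f), max (a + f) (d + e), 2 * d] := by
  rw [tropAdj_fin_three]
  ext i j
  fin_cases i <;> fin_cases j <;>
    simp only [Fin.isValue, Matrix.of_apply, Matrix.cons_val', Matrix.cons_val_one,
      Matrix.cons_val_zero, Matrix.cons_val_fin_one, Matrix.cons_val, Matrix.empty_val',
      Fin.mk_one, Fin.reduceFinMk, Fin.zero_eta]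
  all_goals first | rw [max_eq_right (by linarith), two_mul] | ac_rfl

/-- A `3 × 3` real symmetric matrix with positive off-diagonal distortion values
(the induced subdivision is minimal in nodes) is never regular in the duality
sense. -/
theorem not_regular_of_positive_distortion (A : Matrix (Fin 3) (Fin 3) ℝ)
    (hsym : A.IsSymm)
    (hpos : ∀ i j : Fin 3, i ≠ j → 0 < A i j - (A i i + A j j) / 2) :
    ¬ ∃ lam : ℝ, ∀ i j : Fin 3, tropAdj (tropAdj A) i j = lam + A i j := by
  rintro ⟨lam, hlam⟩
  obtain ⟨a, b, c, d, e, f, rfl⟩ := hsym.exists_eq_fin_three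
  have hd : (a + b) / 2 < d := by simpa using hpos 0 1 (by decide)
  have he : (a + c) / 2 < e := by simpa using hpos 0 2 (by decide)
  have hf : (b + c) / 2 < f := by simpa using hpos 1 2 (by decide)
  rw [tropAdj_fin_three_of_distortion_nonneg hd.le he.le hf.le] at hlam
  set X := max (c + d) (e + f)
  set Y := max (b + e) (d + f)
  set Z := max (a + f) (d + e)
  have hX : e + f ≤ X := le_max_right _ _
  have hY : d + f ≤ Y := le_max_right _ _
  have hZ : d + e ≤ Z := le_max_right _ _
  rw [tropAdj_fin_three_of_distortion_nonneg (by linarith) (by linarith) (by linarith)] at hlam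
  have h00 : 2 * Z = lam + a := by simpa using hlam 0 0
  have h11 : 2 * Y = lam + b := by simpa using hlam 1 1
  have h22 : 2 * X = lam + c := by simpa using hlam 2 2
  have h01 : max (2 * d + X) (Y + Z) = lam + d := by simpa using hlam 0 1
  rcases max_cases (2 * d + X) (Y + Z) with ⟨h, -⟩ | ⟨h, -⟩ <;> linarith
end

section
/- Let m ≥ 2 and let A be an m×m real symmetric matrix whose distortion values satisfy ε_{i,j} < 0 for all i ≠ j, and let E = (ε_{i,j}) be the distortion matrix of A. Then for all i ≠ j, the distortion values of the tropical adjoint A* are given by the tropical minors of E: tropMinor(A, i, j) − (tropMinor(A, i, i) + tropMinor(A, j, j))/2 = tropMinor(E, i, j). -/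
/-!
Writing `d_k = A k k / 2`, the distortion matrix is `E k l = A k l - d_k - d_l`, a shift of the
rows and columns of `A`. Such a shift changes every permutation sum, hence the tropical
determinant and every tropical minor, by the same constant. The diagonal minors of `E` vanish,
because `E` has zero diagonal and nonpositive entries; this pins the constant down as half the
sum of the two diagonal minors of `A`.
-/

theorem tropDet_add_row_add_col {m : ℕ} (M : Matrix (Fin m) (Fin m) ℝ) (u v : Fin m → ℝ) :
    tropDet (fun k l => M k l + u k + v l) = tropDet M + (∑ k, u k + ∑ k, v k) := by
  have hsum : ∀ σ : Equiv.Perm (Fin m),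
      ∑ k, (M k (σ k) + u k + v (σ k)) = ∑ k, M k (σ k) + (∑ k, u k + ∑ k, v k) := by
    intro σ
    rw [Finset.sum_add_distrib, Finset.sum_add_distrib, Equiv.sum_comp σ v, add_assoc]
  simp only [tropDet, hsum, Finset.sup'_add]

theorem tropDet_eq_zero_of_nonpos_of_diag_eq_zero {m : ℕ} (M : Matrix (Fin m) (Fin m) ℝ)
    (hnonpos : ∀ k l, M k l ≤ 0) (hdiag : ∀ k, M k k = 0) : tropDet M = 0 := by
  apply le_antisymm
  · exact Finset.sup'_le _ _ fun σ _ => Finset.sum_nonpos fun k _ => hnonpos k _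
  · calc (0 : ℝ) = ∑ k, M k ((1 : Equiv.Perm (Fin m)) k) := by simp [hdiag]
      _ ≤ tropDet M := Finset.le_sup' (fun σ : Equiv.Perm (Fin m) => ∑ k, M k (σ k))
          (Finset.mem_univ 1)

theorem tropMinor_add_row_add_col {n : ℕ} (M : Matrix (Fin (n + 1)) (Fin (n + 1)) ℝ)
    (u v : Fin (n + 1) → ℝ) (i j : Fin (n + 1)) :
    tropMinor (fun k l => M k l + u k + v l) i j =
      tropMinor M i j + (∑ k, u (i.succAbove k) + ∑ k, v (j.succAbove k)) :=
  tropDet_add_row_add_col (M.submatrix i.succAbove j.succAbove) _ _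

theorem tropMinor_self_eq_zero_of_nonpos_of_diag_eq_zero {n : ℕ}
    (M : Matrix (Fin (n + 1)) (Fin (n + 1)) ℝ) (hnonpos : ∀ k l, M k l ≤ 0)
    (hdiag : ∀ k, M k k = 0) (i : Fin (n + 1)) : tropMinor M i i = 0 :=
  tropDet_eq_zero_of_nonpos_of_diag_eq_zero _ (fun _ _ => hnonpos _ _) (fun _ => hdiag _)

theorem distortion_of_adjoint_general {m : ℕ}
    (A E : Matrix (Fin (m + 1)) (Fin (m + 1)) ℝ)
    (hE : ∀ i j, E i j = A i j - (A i i + A j j) / 2)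
    (hneg : ∀ i j : Fin (m + 1), i ≠ j → A i j - (A i i + A j j) / 2 < 0) :
    ∀ i j : Fin (m + 1), i ≠ j →
      tropMinor A i j - (tropMinor A i i + tropMinor A j j) / 2 =
        tropMinor E i j := by
  intro i j _
  set d : Fin (m + 1) → ℝ := fun k => -(A k k / 2)
  have hE_shift : E = fun k l => A k l + d k + d l := by
    ext k l
    rw [hE]
    ring
  have hE_nonpos : ∀ k l, E k l ≤ 0 := by
    intro k l
    rcases eq_or_ne k l with rfl | hkl
    · simp [hE]
    · exact (hE k l ▸ hneg k l hkl).le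
  have hminor : ∀ p q, tropMinor E p q =
      tropMinor A p q + (∑ k, d (p.succAbove k) + ∑ k, d (q.succAbove k)) := by
    intro p q
    rw [hE_shift, tropMinor_add_row_add_col]
  have hdiag : ∀ p, tropMinor E p p = 0 :=
    tropMinor_self_eq_zero_of_nonpos_of_diag_eq_zero E hE_nonpos (fun k => by simp [hE])
  have hi := hminor i i
  have hj := hminor j j
  rw [hdiag] at hi hj
  rw [hminor i j]
  linarith

/-- If all off-diagonal distortion values of the symmetric matrix `A` are
negative and `E` is its distortion matrix, then the distortion values of the
tropical adjoint of `A` are given by the tropical minors of `E`. -/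
theorem distortion_of_adjoint {m : ℕ} (hm : 1 ≤ m)
    (A E : Matrix (Fin (m + 1)) (Fin (m + 1)) ℝ) (hsym : A.IsSymm)
    (hE : ∀ i j, E i j = A i j - (A i i + A j j) / 2)
    (hneg : ∀ i j : Fin (m + 1), i ≠ j → A i j - (A i i + A j j) / 2 < 0) :
    ∀ i j : Fin (m + 1), i ≠ j →
      tropMinor A i j - (tropMinor A i i + tropMinor A j j) / 2 =
        tropMinor E i j :=
  distortion_of_adjoint_general A E hE hneg
end

section
/- Let m ≥ 2 and let A be an m×m real symmetric matrix satisfying 2·a_{i,j} < a_{i,i} + a_{j,j} for all i ≠ j, and let A* be the tropical adjoint of A. Then the lifting constant of the double dual is (m−2) times the trace: for every index i, tropMinor(A*, i, i) = a_{i,i} + (m−2)·(∑_l a_{l,l}). -/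
/-!
Call a matrix strictly diagonally dominant if `2 M i j < M i i + M j j` whenever `i ≠ j`.
Pairing each entry `M (f k) (g k)` with the diagonal entries `M (f k) (f k)` and
`M (g k) (g k)` shows that for such a matrix the identity is the unique optimal permutation,
so `tropDet M = trace M`; the same pairing bounds every off-diagonal minor strictly by the mean
of the two corresponding diagonal minors. Hence the tropical adjoint is again strictly
diagonally dominant, with diagonal `trace A - A i i`, and its principal minors are computed
by applying the first fact twice.
-/

open Matrix

theorem tropAdj_apply {n : ℕ} (M : Matrix (Fin (n + 1)) (Fin (n + 1)) ℝ) (i j : Fin (n + 1)) :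
    tropAdj M i j = tropMinor M i j :=
  rfl

def StrictDiagDominant {n : Type*} (M : Matrix n n ℝ) : Prop :=
  ∀ i j, i ≠ j → 2 * M i j < M i i + M j j

namespace StrictDiagDominant

section General

variable {n ι : Type*} {M : Matrix n n ℝ}

theorem submatrix (hM : StrictDiagDominant M) {f : ι → n} (hf : Function.Injective f) :
    StrictDiagDominant (M.submatrix f f) :=
  fun i j hij => hM (f i) (f j) (hf.ne hij)

variable [Fintype ι]

theorem two_mul_le (hM : StrictDiagDominant M) (i j : n) : 2 * M i j ≤ M i i + M j j := by
  rcases eq_or_ne i j with rfl | hij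
  · exact le_of_eq (two_mul _)
  · exact (hM i j hij).le

theorem two_mul_sum_le (hM : StrictDiagDominant M) (f g : ι → n) :
    2 * ∑ k, M (f k) (g k) ≤ ∑ k, M (f k) (f k) + ∑ k, M (g k) (g k) := by
  rw [Finset.mul_sum, ← Finset.sum_add_distrib]
  exact Finset.sum_le_sum fun k _ => hM.two_mul_le (f k) (g k)

theorem two_mul_sum_lt (hM : StrictDiagDominant M) {f g : ι → n} (hfg : ∃ k, f k ≠ g k) :
    2 * ∑ k, M (f k) (g k) < ∑ k, M (f k) (f k) + ∑ k, M (g k) (g k) := by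
  obtain ⟨k₀, hk₀⟩ := hfg
  rw [Finset.mul_sum, ← Finset.sum_add_distrib]
  exact Finset.sum_lt_sum (fun k _ => hM.two_mul_le (f k) (g k))
    ⟨k₀, Finset.mem_univ _, hM _ _ hk₀⟩

theorem sum_perm_le [Fintype n] (hM : StrictDiagDominant M) (σ : Equiv.Perm n) :
    ∑ k, M k (σ k) ≤ M.trace := by
  have h := hM.two_mul_sum_le id σ
  rw [Equiv.sum_comp σ fun k => M k k] at h
  simp only [id, trace, diag] at h ⊢
  linarith

end General

section Tropical

variable {m : ℕ}

theorem tropDet_eq_trace {M : Matrix (Fin m) (Fin m) ℝ} (hM : StrictDiagDominant M) :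
    tropDet M = M.trace := by
  refine le_antisymm (Finset.sup'_le _ _ fun σ _ => hM.sum_perm_le σ) ?_
  exact Finset.le_sup'_of_le _ (Finset.mem_univ 1) le_rfl

theorem trace_submatrix_succAbove (M : Matrix (Fin (m + 1)) (Fin (m + 1)) ℝ)
    (i : Fin (m + 1)) : (M.submatrix i.succAbove i.succAbove).trace = M.trace - M i i := by
  rw [eq_sub_iff_add_eq', trace, trace, Fin.sum_univ_succAbove _ i]
  rfl

variable {M : Matrix (Fin (m + 1)) (Fin (m + 1)) ℝ}

theorem tropMinor_self (hM : StrictDiagDominant M) (i : Fin (m + 1)) :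
    tropMinor M i i = M.trace - M i i := by
  rw [tropMinor, (hM.submatrix Fin.succAbove_right_injective).tropDet_eq_trace,
    trace_submatrix_succAbove]

theorem two_mul_tropMinor_lt (hM : StrictDiagDominant M) {i j : Fin (m + 1)} (hij : i ≠ j) :
    2 * tropMinor M i j < tropMinor M i i + tropMinor M j j := by
  suffices tropMinor M i j < (tropMinor M i i + tropMinor M j j) / 2 by linarith
  refine (Finset.sup'_lt_iff Finset.univ_nonempty).mpr fun τ _ => ?_
  -- row `j` survives the deletion of row `i`, but column `j` is deleted
  have hne : ∃ k, i.succAbove k ≠ j.succAbove (τ k) := by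
    obtain ⟨k, hk⟩ := Fin.exists_succAbove_eq hij.symm
    exact ⟨k, hk ▸ (Fin.succAbove_ne j (τ k)).symm⟩
  have h := hM.two_mul_sum_lt hne
  rw [Equiv.sum_comp τ fun k => M (j.succAbove k) (j.succAbove k)] at h
  rw [hM.tropMinor_self, hM.tropMinor_self, ← trace_submatrix_succAbove,
    ← trace_submatrix_succAbove]
  simp only [trace, diag, submatrix_apply]
  linarith

theorem trace_tropAdj (hM : StrictDiagDominant M) : (tropAdj M).trace = m * M.trace := by
  simp only [trace, diag, tropAdj_apply, hM.tropMinor_self, Finset.sum_sub_distrib,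
    Finset.sum_const, Finset.card_univ, Fintype.card_fin, nsmul_eq_mul]
  push_cast
  ring

theorem tropAdj (hM : StrictDiagDominant M) : StrictDiagDominant (tropAdj M) :=
  fun _ _ hij => hM.two_mul_tropMinor_lt hij

end Tropical

end StrictDiagDominant

theorem lifting_constant_of_double_dual_general {m : ℕ}
    (A : Matrix (Fin (m + 1)) (Fin (m + 1)) ℝ)
    (h : ∀ i j : Fin (m + 1), i ≠ j → 2 * A i j < A i i + A j j) :
    ∀ i : Fin (m + 1),
      tropMinor (tropAdj A) i i = A i i + ((m : ℝ) - 1) * ∑ l, A l l := by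
  intro i
  have hA : StrictDiagDominant A := h
  rw [hA.tropAdj.tropMinor_self, hA.trace_tropAdj, tropAdj_apply, hA.tropMinor_self, trace]
  simp only [diag]
  ring

/-- For a symmetric matrix `A` of size `m + 1` (`m ≥ 1`) with
`2 * A i j < A i i + A j j` for all `i ≠ j`, the principal tropical minors of
the tropical adjoint are `A i i` plus `(size − 2)` times the trace. -/
theorem lifting_constant_of_double_dual {m : ℕ} (hm : 1 ≤ m)
    (A : Matrix (Fin (m + 1)) (Fin (m + 1)) ℝ) (hsym : A.IsSymm)
    (h : ∀ i j : Fin (m + 1), i ≠ j → 2 * A i j < A i i + A j j) :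
    ∀ i : Fin (m + 1),
      tropMinor (tropAdj A) i i = A i i + ((m : ℝ) - 1) * ∑ l, A l l :=
  lifting_constant_of_double_dual_general A h
end

section
/- Let m ≥ 2 and let A be an m×m real symmetric matrix satisfying 2·a_{i,j} < a_{i,i} + a_{j,j} for all i ≠ j. Then the tropical determinant of A equals its trace, tropDet(A) = ∑_i a_{i,i}, and the identity permutation is the unique permutation attaining the maximum in the definition of tropDet(A) (so the tropical determinant is valid, i.e. the maximum is achieved by a single component). -/
open Finset

theorem tropDet_eq_sum_diag_of_forall_le {m : ℕ} (M : Matrix (Fin m) (Fin m) ℝ)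
    (hM : ∀ σ : Equiv.Perm (Fin m), ∑ k, M k (σ k) ≤ ∑ k, M k k) :
    tropDet M = ∑ k, M k k :=
  le_antisymm (sup'_le _ _ fun σ _ => hM σ)
    (le_sup'_of_le _ (mem_univ (1 : Equiv.Perm (Fin m))) le_rfl)

theorem Matrix.sum_apply_perm_lt_sum_diag {n R : Type*} [Fintype n] [CommRing R] [LinearOrder R]
    [IsStrictOrderedRing R] (A : Matrix n n R) (h : ∀ i j, i ≠ j → 2 * A i j < A i i + A j j)
    {σ : Equiv.Perm n} (hσ : σ ≠ 1) :
    ∑ k, A k (σ k) < ∑ k, A k k := by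
  obtain ⟨k₀, hk₀⟩ : ∃ k, σ k ≠ k := not_forall.mp fun hfix => hσ (Equiv.ext hfix)
  have hpair : ∀ k, 2 * A k (σ k) ≤ A k k + A (σ k) (σ k) := fun k => by
    rcases eq_or_ne (σ k) k with hk | hk
    · rw [hk, two_mul]
    · exact (h k (σ k) hk.symm).le
  refine lt_of_mul_lt_mul_left ?_ zero_le_two
  calc 2 * ∑ k, A k (σ k) = ∑ k, 2 * A k (σ k) := mul_sum _ _ _
    _ < ∑ k, (A k k + A (σ k) (σ k)) :=
      sum_lt_sum (fun k _ => hpair k) ⟨k₀, mem_univ _, h k₀ (σ k₀) hk₀.symm⟩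
    _ = 2 * ∑ k, A k k := by
      rw [sum_add_distrib, Equiv.sum_comp σ (fun k => A k k), two_mul]

theorem tropDet_eq_trace_of_maximal_general {m : ℕ}
    (A : Matrix (Fin (m + 1)) (Fin (m + 1)) ℝ)
    (h : ∀ i j : Fin (m + 1), i ≠ j → 2 * A i j < A i i + A j j) :
    tropDet A = ∑ i, A i i ∧
    ∀ σ : Equiv.Perm (Fin (m + 1)), σ ≠ 1 →
      ∑ k, A k (σ k) < ∑ k, A k k := by
  have hlt : ∀ σ : Equiv.Perm (Fin (m + 1)), σ ≠ 1 → ∑ k, A k (σ k) < ∑ k, A k k :=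
    fun σ hσ => A.sum_apply_perm_lt_sum_diag h hσ
  refine ⟨tropDet_eq_sum_diag_of_forall_le A fun σ => ?_, hlt⟩
  rcases eq_or_ne σ 1 with rfl | hσ
  · rfl
  · exact (hlt σ hσ).le

/-- For a symmetric matrix `A` with `2 * A i j < A i i + A j j` for all `i ≠ j`,
the tropical determinant equals the trace, and the identity permutation is the
unique maximizer (the tropical determinant is valid). -/
theorem tropDet_eq_trace_of_maximal {m : ℕ} (hm : 1 ≤ m)
    (A : Matrix (Fin (m + 1)) (Fin (m + 1)) ℝ) (hsym : A.IsSymm)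
    (h : ∀ i j : Fin (m + 1), i ≠ j → 2 * A i j < A i i + A j j) :
    tropDet A = ∑ i, A i i ∧
    ∀ σ : Equiv.Perm (Fin (m + 1)), σ ≠ 1 →
      ∑ k, A k (σ k) < ∑ k, A k k :=
  tropDet_eq_trace_of_maximal_general A h
end
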